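/- Let G be a connected graph with no isolated vertices, r a positive integer, and f a real polynomial. If 𝓛^r = f(Q), or Q^r = f(𝓛), or 𝓛^r = f(L), or L^r = f(𝓛), then G is regular. -/

import Mathlib

/-!
If `𝓛 ^ r` is a polynomial in `Q`, or `Q ^ r` a polynomial in `𝓛`, then `𝓛` and `Q` commute,
because a positive semidefinite matrix is a function (an `r`-th root) of its `r`-th power.
Writing `s = D^{1/2} 𝟙`, the `(u, v)` entry of `D^{1/2} [Q, 𝓛] D^{1/2}` is, up to sign,
`(s u - s v) * ((s u + s v) A u v + (A D^{-1/2} A) u v)`, whose second factor is positive on edges;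
so `s` is constant along edges.

If `𝓛 ^ r = f(L)`, then `𝓛 ^ r 𝟙 = f(0) 𝟙`; pairing with the kernel vector `s` of the symmetric
matrix `𝓛 ^ r` forces `f(0) = 0`, hence `𝟙 ∈ ker 𝓛`, i.e. `D^{-1/2} 𝟙 ∈ ker L`. Symmetrically,
`L ^ r = f(𝓛)` gives `s ∈ ker L`. On a connected graph `ker L` consists of the constant vectors.
-/

open Matrix Polynomial

theorem Polynomial.commute_aeval_self {R A : Type*} [CommSemiring R] [Semiring A] [Algebra R A]
    (a : A) (p : R[X]) : Commute a (aeval a p) := by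
  simpa using (commute_X p).map (aeval a)

namespace Matrix

variable {n R : Type*} [Fintype n]

theorem IsSymm.dotProduct_mulVec_comm [CommSemiring R] {M : Matrix n n R} (hM : M.IsSymm)
    (u v : n → R) : u ⬝ᵥ M *ᵥ v = M *ᵥ u ⬝ᵥ v := by
  rw [dotProduct_mulVec, ← mulVec_transpose, hM.eq]

variable [DecidableEq n]

theorem aeval_mulVec_of_mulVec_eq_zero [CommRing R] {M : Matrix n n R} {x : n → R}
    (h : M *ᵥ x = 0) (f : R[X]) : aeval M f *ᵥ x = f.coeff 0 • x := by
  conv_lhs => rw [← divX_mul_X_add f]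
  rw [map_add, map_mul, aeval_X, aeval_C, add_mulVec, ← mulVec_mulVec, h, mulVec_zero, zero_add,
    Algebra.algebraMap_eq_smul_one, smul_mulVec, one_mulVec]

section LinearOrderedRing

variable [CommRing R] [LinearOrder R] [IsStrictOrderedRing R]

theorem IsSymm.mulVec_eq_zero_of_pow_mulVec_eq_zero {M : Matrix n n R} (hM : M.IsSymm)
    {x : n → R} {r : ℕ} (hr : r ≠ 0) (h : M ^ r *ᵥ x = 0) : M *ᵥ x = 0 := by
  obtain ⟨k, rfl⟩ := Nat.exists_eq_add_one_of_ne_zero hr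
  induction k with
  | zero => simpa using h
  | succ k ih =>
    refine ih k.succ_ne_zero (dotProduct_self_eq_zero.mp ?_)
    calc M ^ (k + 1) *ᵥ x ⬝ᵥ M ^ (k + 1) *ᵥ x = M ^ k *ᵥ x ⬝ᵥ M ^ (k + 1 + 1) *ᵥ x := by
          rw [pow_succ' M (k + 1), ← mulVec_mulVec, hM.dotProduct_mulVec_comm, mulVec_mulVec,
            ← pow_succ']
      _ = 0 := by rw [h, dotProduct_zero]

theorem IsSymm.mulVec_eq_zero_of_pow_eq_aeval {M N : Matrix n n R} (hN : N.IsSymm)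
    {x y : n → R} (hMx : M *ᵥ x = 0) (hNy : N *ᵥ y = 0) (hxy : x ⬝ᵥ y ≠ 0)
    {r : ℕ} (hr : r ≠ 0) {f : R[X]} (h : N ^ r = aeval M f) : N *ᵥ x = 0 := by
  have hNrx : N ^ r *ᵥ x = f.coeff 0 • x := h ▸ aeval_mulVec_of_mulVec_eq_zero hMx f
  have hNry : N ^ r *ᵥ y = 0 := by
    obtain ⟨k, rfl⟩ := Nat.exists_eq_add_one_of_ne_zero hr
    rw [pow_succ, ← mulVec_mulVec, hNy, mulVec_zero]
  have hf : f.coeff 0 * (x ⬝ᵥ y) = 0 := by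
    rw [← smul_eq_mul, ← smul_dotProduct, ← hNrx, ← (hN.pow r).dotProduct_mulVec_comm, hNry,
      dotProduct_zero]
  refine hN.mulVec_eq_zero_of_pow_mulVec_eq_zero hr ?_
  rw [hNrx, (mul_eq_zero.mp hf).resolve_right hxy, zero_smul]

end LinearOrderedRing

theorem PosSemidef.commute_of_commute_pow {M C : Matrix n n ℝ} (hM : M.PosSemidef)
    {r : ℕ} (hr : r ≠ 0) (h : Commute (M ^ r) C) : Commute M C := by
  have hM' : IsSelfAdjoint M := hM.isHermitian
  have hroot : cfc (fun x : ℝ => x ^ (r⁻¹ : ℝ)) (M ^ r) = M := by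
    rw [← cfc_pow_id (R := ℝ) M r, ← cfc_comp' (fun x : ℝ => x ^ (r⁻¹ : ℝ)) (· ^ r) M]
    conv_rhs => rw [← cfc_id' ℝ M]
    refine cfc_congr fun x hx => ?_
    have hx0 : 0 ≤ x := (posSemidef_iff_isHermitian_and_spectrum_nonneg.mp hM).2 hx
    rw [← Real.rpow_natCast, ← Real.rpow_mul hx0, mul_inv_cancel₀ (by exact_mod_cast hr),
      Real.rpow_one]
  exact hroot ▸ h.cfc_real _

theorem sub_mul_eq_zero_of_commute_diagonal_sq_add {K : Type*} [Field K] {s : n → K}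
    (hs : ∀ i, s i ≠ 0) {A : Matrix n n K}
    (h : Commute (diagonal (s ^ 2) + A) (diagonal s⁻¹ * A * diagonal s⁻¹)) (i j : n) :
    (s i - s j) * ((s i + s j) * A i j + (A * diagonal s⁻¹ * A) i j) = 0 := by
  set B := A * diagonal s⁻¹ * A
  have hl : (diagonal (s ^ 2) + A) * (diagonal s⁻¹ * A * diagonal s⁻¹) =
      diagonal (s ^ 2) * (diagonal s⁻¹ * A * diagonal s⁻¹) + B * diagonal s⁻¹ := by
    simp only [B, add_mul, mul_assoc]
  have hr : (diagonal s⁻¹ * A * diagonal s⁻¹) * (diagonal (s ^ 2) + A) =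
      (diagonal s⁻¹ * A * diagonal s⁻¹) * diagonal (s ^ 2) + diagonal s⁻¹ * B := by
    simp only [B, mul_add, mul_assoc]
  have hij := congrFun (congrFun h.eq i) j
  rw [hl, hr] at hij
  simp only [add_apply, diagonal_mul, mul_diagonal, Pi.inv_apply, Pi.pow_apply] at hij
  have hi := hs i
  have hj := hs j
  field_simp at hij
  linear_combination hij

end Matrix

theorem Real.sqrt_natCast_injective : (fun n : ℕ => √(n : ℝ)).Injective := fun m n h => by
  simpa using (Real.sqrt_inj m.cast_nonneg n.cast_nonneg).mp h

namespace SimpleGraph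

variable {V : Type*} [Fintype V] [DecidableEq V] (G : SimpleGraph V) [DecidableRel G.Adj]

def signlessLapMatrix (R : Type*) [AddMonoidWithOne R] : Matrix V V R :=
  G.degMatrix R + G.adjMatrix R

noncomputable def sqrtDegree (v : V) : ℝ := √(G.degree v)

noncomputable def normLapMatrix : Matrix V V ℝ :=
  diagonal G.sqrtDegree⁻¹ * G.lapMatrix ℝ * diagonal G.sqrtDegree⁻¹

theorem signlessLapMatrix_eq_incMatrix_mul_transpose (R : Type*) [Semiring R] :
    G.signlessLapMatrix R = G.incMatrix R * (G.incMatrix R)ᵀ := by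
  rw [incMatrix_mul_transpose]
  ext u v
  by_cases huv : u = v
  · subst huv
    simp [signlessLapMatrix, degMatrix]
  · simp [signlessLapMatrix, degMatrix, huv]

theorem posSemidef_signlessLapMatrix : (G.signlessLapMatrix ℝ).PosSemidef := by
  rw [signlessLapMatrix_eq_incMatrix_mul_transpose, ← conjTranspose_eq_transpose_of_trivial]
  exact posSemidef_self_mul_conjTranspose _

theorem posSemidef_normLapMatrix : G.normLapMatrix.PosSemidef := by
  have h := (posSemidef_lapMatrix ℝ G).mul_mul_conjTranspose_same (diagonal G.sqrtDegree⁻¹)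
  rwa [diagonal_conjTranspose, star_trivial] at h

theorem isSymm_normLapMatrix : G.normLapMatrix.IsSymm :=
  isHermitian_iff_isSymm.mp G.posSemidef_normLapMatrix.isHermitian

theorem normLapMatrix_mulVec (x : V → ℝ) :
    G.normLapMatrix *ᵥ x = G.sqrtDegree⁻¹ * (G.lapMatrix ℝ *ᵥ (G.sqrtDegree⁻¹ * x)) := by
  have hdiag (d y : V → ℝ) : diagonal d *ᵥ y = d * y := funext (mulVec_diagonal d y)
  rw [normLapMatrix, ← mulVec_mulVec, ← mulVec_mulVec, hdiag, hdiag]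

theorem degMatrix_eq_diagonal_sqrtDegree_sq : G.degMatrix ℝ = diagonal (G.sqrtDegree ^ 2) := by
  ext u v
  simp [degMatrix, sqrtDegree, diagonal_apply]

variable {G}

omit [DecidableEq V] in
theorem sqrtDegree_pos (hdeg : ∀ v, 0 < G.degree v) (v : V) : 0 < G.sqrtDegree v :=
  Real.sqrt_pos.mpr (Nat.cast_pos.mpr (hdeg v))

theorem normLapMatrix_eq_one_sub (hdeg : ∀ v, 0 < G.degree v) :
    G.normLapMatrix =
      1 - diagonal G.sqrtDegree⁻¹ * G.adjMatrix ℝ * diagonal G.sqrtDegree⁻¹ := by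
  rw [normLapMatrix, lapMatrix, degMatrix_eq_diagonal_sqrtDegree_sq, mul_sub, sub_mul,
    diagonal_mul_diagonal, diagonal_mul_diagonal, ← diagonal_one]
  congr
  funext v
  simp only [Pi.inv_apply, Pi.pow_apply]
  field_simp [(sqrtDegree_pos hdeg v).ne']

theorem normLapMatrix_mulVec_sqrtDegree (hdeg : ∀ v, 0 < G.degree v) :
    G.normLapMatrix *ᵥ G.sqrtDegree = 0 := by
  have h1 : G.sqrtDegree⁻¹ * G.sqrtDegree = 1 :=
    funext fun v => inv_mul_cancel₀ (sqrtDegree_pos hdeg v).ne'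
  rw [normLapMatrix_mulVec, h1, Pi.one_def, lapMatrix_mulVec_const_eq_zero, mul_zero]

theorem lapMatrix_mulVec_inv_sqrtDegree (hdeg : ∀ v, 0 < G.degree v)
    (h : G.normLapMatrix *ᵥ 1 = 0) : G.lapMatrix ℝ *ᵥ G.sqrtDegree⁻¹ = 0 := by
  rw [normLapMatrix_mulVec, mul_one] at h
  funext v
  exact (mul_eq_zero.mp (congrFun h v)).resolve_left (inv_ne_zero (sqrtDegree_pos hdeg v).ne')

theorem lapMatrix_mulVec_sqrtDegree_of_commute (hdeg : ∀ v, 0 < G.degree v)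
    (h : Commute (G.signlessLapMatrix ℝ) G.normLapMatrix) :
    G.lapMatrix ℝ *ᵥ G.sqrtDegree = 0 := by
  set s := G.sqrtDegree
  have hs : ∀ v, 0 < s v := sqrtDegree_pos hdeg
  have hcomm : Commute (diagonal (s ^ 2) + G.adjMatrix ℝ)
      (diagonal s⁻¹ * G.adjMatrix ℝ * diagonal s⁻¹) := by
    rw [normLapMatrix_eq_one_sub hdeg, signlessLapMatrix, degMatrix_eq_diagonal_sqrtDegree_sq] at h
    simpa using (Commute.one_right _).sub_right h
  rw [lapMatrix_mulVec_eq_zero_iff_forall_adj]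
  intro u v huv
  have hpaths : 0 ≤ (G.adjMatrix ℝ * diagonal s⁻¹ * G.adjMatrix ℝ) u v := by
    rw [mul_apply]
    simp only [mul_diagonal, adjMatrix_apply, Pi.inv_apply]
    exact Finset.sum_nonneg fun w _ => by have := hs w; split_ifs <;> positivity
  have hpos : 0 < (s u + s v) * G.adjMatrix ℝ u v +
      (G.adjMatrix ℝ * diagonal s⁻¹ * G.adjMatrix ℝ) u v := by
    rw [adjMatrix_apply, if_pos huv, mul_one]
    linarith [hs u, hs v]
  have key := sub_mul_eq_zero_of_commute_diagonal_sq_add (fun w => (hs w).ne') hcomm u v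
  exact sub_eq_zero.mp ((mul_eq_zero.mp key).resolve_right hpos.ne')

theorem Connected.exists_isRegularOfDegree_of_lapMatrix_mulVec_eq_zero (hG : G.Connected)
    {φ : ℕ → ℝ} (hφ : φ.Injective) (h : G.lapMatrix ℝ *ᵥ (fun v => φ (G.degree v)) = 0) :
    ∃ d, G.IsRegularOfDegree d := by
  obtain ⟨v₀⟩ := hG.nonempty
  exact ⟨G.degree v₀, fun v => hφ <|
    (lapMatrix_mulVec_eq_zero_iff_forall_reachable G).mp h v v₀ (hG.preconnected v v₀)⟩

end SimpleGraph

/-- If `G` is connected with no isolated vertices and `𝓛^r = f(Q)`,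
`Q^r = f(𝓛)`, `𝓛^r = f(L)`, or `L^r = f(𝓛)` for some polynomial `f` and
positive integer `r`, then `G` is regular. -/
theorem regular_of_normalized_laplacian_relation
    {V : Type*} [Fintype V] [DecidableEq V]
    (G : SimpleGraph V) [DecidableRel G.Adj] (hconn : G.Connected)
    (hdeg : ∀ v : V, 0 < G.degree v)
    (r : ℕ) (hr : 0 < r) (f : Polynomial ℝ)
    (A D Q L NL : Matrix V V ℝ)
    (hA : A = G.adjMatrix ℝ)
    (hD : D = Matrix.diagonal fun v => (G.degree v : ℝ))
    (hQ : Q = D + A)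
    (hL : L = D - A)
    (hNL : NL = Matrix.diagonal (fun v => (Real.sqrt (G.degree v))⁻¹) * L *
      Matrix.diagonal (fun v => (Real.sqrt (G.degree v))⁻¹))
    (hrel : NL ^ r = Polynomial.aeval Q f ∨
            Q ^ r = Polynomial.aeval NL f ∨
            NL ^ r = Polynomial.aeval L f ∨
            L ^ r = Polynomial.aeval NL f) :
    ∃ d : ℕ, G.IsRegularOfDegree d := by
  obtain rfl : Q = G.signlessLapMatrix ℝ := by rw [hQ, hD, hA]; rfl
  obtain rfl : L = G.lapMatrix ℝ := by rw [hL, hD, hA]; rfl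
  obtain rfl : NL = G.normLapMatrix := hNL
  have hs : G.normLapMatrix *ᵥ G.sqrtDegree = 0 := SimpleGraph.normLapMatrix_mulVec_sqrtDegree hdeg
  have h1 : G.lapMatrix ℝ *ᵥ 1 = 0 := G.lapMatrix_mulVec_const_eq_zero
  have hsum : (1 : V → ℝ) ⬝ᵥ G.sqrtDegree ≠ 0 := by
    rw [one_dotProduct]
    exact (Finset.sum_pos (fun v _ => SimpleGraph.sqrtDegree_pos hdeg v)
      (Finset.univ_nonempty_iff.mpr hconn.nonempty)).ne'
  rcases hrel with h | h | h | h
  · have hcomm := G.posSemidef_normLapMatrix.commute_of_commute_pow hr.ne' <|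
      h ▸ (commute_aeval_self _ f).symm
    exact hconn.exists_isRegularOfDegree_of_lapMatrix_mulVec_eq_zero Real.sqrt_natCast_injective
      (SimpleGraph.lapMatrix_mulVec_sqrtDegree_of_commute hdeg hcomm.symm)
  · have hcomm := G.posSemidef_signlessLapMatrix.commute_of_commute_pow hr.ne' <|
      h ▸ (commute_aeval_self _ f).symm
    exact hconn.exists_isRegularOfDegree_of_lapMatrix_mulVec_eq_zero Real.sqrt_natCast_injective
      (SimpleGraph.lapMatrix_mulVec_sqrtDegree_of_commute hdeg hcomm)
  · have hN1 := G.isSymm_normLapMatrix.mulVec_eq_zero_of_pow_eq_aeval h1 hs hsum hr.ne' h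
    exact hconn.exists_isRegularOfDegree_of_lapMatrix_mulVec_eq_zero
      (inv_injective.comp Real.sqrt_natCast_injective)
      (SimpleGraph.lapMatrix_mulVec_inv_sqrtDegree hdeg hN1)
  · exact hconn.exists_isRegularOfDegree_of_lapMatrix_mulVec_eq_zero Real.sqrt_natCast_injective
      ((G.isSymm_lapMatrix ℝ).mulVec_eq_zero_of_pow_eq_aeval hs h1
        (by rwa [dotProduct_comm]) hr.ne' h)
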